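/- Let U be uniform on (−2^{-d}, 2^{-d}), Z ~ N(0, σ²) independent of U with σ = 1/√a, G(x) = x·Q(x) − (1/√(2π))·e^{−x²/2} where Q(x) = P(N(0,1) ≥ x). Then P(−1 + U ≤ Z < 1 + U) = 1 − [G(√a(1+2^{-d})) − G(√a(1−2^{-d}))]/(√a·2^{-d}). -/

import Mathlib

/-- The standard normal tail function `Q(x) = P(N(0,1) ≥ x)`. -/
noncomputable def gaussQ (x : ℝ) : ℝ :=
  ∫ t in Set.Ioi x, Real.exp (-t ^ 2 / 2) / Real.sqrt (2 * Real.pi)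

/-- `G(x) = x Q(x) − φ(x)`, an antiderivative of `Q`. -/
noncomputable def gaussG (x : ℝ) : ℝ :=
  x * gaussQ x - Real.exp (-x ^ 2 / 2) / Real.sqrt (2 * Real.pi)

open MeasureTheory

open Set Real

noncomputable def gphi (t : ℝ) : ℝ := Real.exp (-t ^ 2 / 2) / Real.sqrt (2 * Real.pi)

lemma gphi_cont : Continuous gphi := by
  unfold gphi; fun_prop

lemma gphi_nonneg (t : ℝ) : 0 ≤ gphi t := by
  unfold gphi; positivity

lemma gphi_integrable : Integrable gphi := by
  have h : Integrable (fun x : ℝ => Real.exp (-(1/2 : ℝ) * x ^ 2)) :=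
    integrable_exp_neg_mul_sq (by norm_num)
  have := h.div_const (Real.sqrt (2 * Real.pi))
  convert this using 2 with x
  unfold gphi
  ring_nf

lemma gphi_integral : ∫ t, gphi t = 1 := by
  unfold gphi
  simp_rw [div_eq_mul_inv, integral_mul_const]
  have : (fun t : ℝ => Real.exp (-t ^ 2 * 2⁻¹)) = fun t : ℝ => Real.exp (-(1/2 : ℝ) * t ^ 2) := by
    funext t; ring_nf
  rw [this, integral_gaussian]
  rw [show Real.pi / (1/2) = 2 * Real.pi by ring]
  exact mul_inv_cancel₀ (Real.sqrt_ne_zero'.2 (by positivity))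

lemma gaussQ_def' (x : ℝ) : gaussQ x = ∫ t in Set.Ioi x, gphi t := rfl

lemma gaussQ_sub {s t : ℝ} (h : s ≤ t) :
    gaussQ s - gaussQ t = ∫ u in Set.Ioc s t, gphi u := by
  rw [gaussQ_def', gaussQ_def', ← Set.Ioc_union_Ioi_eq_Ioi h,
    setIntegral_union (Set.Ioc_disjoint_Ioi le_rfl) measurableSet_Ioi
      gphi_integrable.integrableOn gphi_integrable.integrableOn]
  ring

lemma gaussQ_diff_nonneg {s t : ℝ} (h : s ≤ t) : 0 ≤ gaussQ s - gaussQ t := by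
  rw [gaussQ_sub h]
  exact setIntegral_nonneg measurableSet_Ioc (fun x _ => gphi_nonneg x)

lemma gaussQ_eq_sub (x : ℝ) : gaussQ x = gaussQ 0 - ∫ t in (0:ℝ)..x, gphi t := by
  rcases le_total 0 x with h | h
  · rw [intervalIntegral.integral_of_le h, ← gaussQ_sub h]; ring
  · rw [intervalIntegral.integral_of_ge h, ← gaussQ_sub h]; ring

lemma hasDerivAt_gaussQ (x : ℝ) : HasDerivAt gaussQ (-(gphi x)) x := by
  have h1 : HasDerivAt (fun y => ∫ t in (0:ℝ)..y, gphi t) (gphi x) x :=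
    intervalIntegral.integral_hasDerivAt_right gphi_integrable.intervalIntegrable
      gphi_cont.stronglyMeasurable.stronglyMeasurableAtFilter
      gphi_cont.continuousAt
  have h2 := h1.const_sub (gaussQ 0)
  have : (fun y => gaussQ 0 - ∫ t in (0:ℝ)..y, gphi t) = gaussQ := by
    funext y; exact (gaussQ_eq_sub y).symm
  rw [this] at h2
  simpa using h2

lemma continuous_gaussQ : Continuous gaussQ :=
  continuous_iff_continuousAt.2 fun x => (hasDerivAt_gaussQ x).continuousAt

lemma hasDerivAt_gphi (x : ℝ) : HasDerivAt gphi (-x * gphi x) x := by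
  have h1 : HasDerivAt (fun t : ℝ => -t ^ 2 / 2) (-x) x := by
    have := ((hasDerivAt_pow 2 x).neg.div_const 2)
    refine this.congr_deriv ?_; push_cast; ring
  have h2 := (h1.exp).div_const (Real.sqrt (2 * Real.pi))
  refine h2.congr_deriv ?_
  unfold gphi; ring

lemma hasDerivAt_gaussG (x : ℝ) : HasDerivAt gaussG (gaussQ x) x := by
  have h1 := ((hasDerivAt_id x).mul (hasDerivAt_gaussQ x)).sub (hasDerivAt_gphi x)
  have : (id * gaussQ - gphi : ℝ → ℝ) = gaussG := by
    funext y; rfl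
  rw [this] at h1
  refine h1.congr_deriv ?_
  simp

lemma gaussQ_neg (x : ℝ) : gaussQ (-x) = 1 - gaussQ x := by
  have h1 : gaussQ (-x) = ∫ t in Set.Iic x, gphi t := by
    rw [gaussQ_def']
    rw [show (∫ t in Set.Ioi (-x), gphi t) = ∫ t in Set.Ioi (-x), gphi (-t) by
      refine setIntegral_congr_fun measurableSet_Ioi fun t _ => ?_
      unfold gphi; rw [neg_pow]; norm_num]
    rw [integral_comp_neg_Ioi, neg_neg]
  have h2 : (∫ t in Set.Iic x, gphi t) + ∫ t in Set.Ioi x, gphi t = 1 := by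
    rw [← gphi_integral, ← setIntegral_union (Set.Iic_disjoint_Ioi le_rfl) measurableSet_Ioi
      gphi_integrable.integrableOn gphi_integrable.integrableOn, Set.Iic_union_Ioi,
      setIntegral_univ]
  rw [h1, gaussQ_def']
  linarith

lemma gaussG_neg (x : ℝ) : gaussG (-x) = gaussG x - x := by
  unfold gaussG
  rw [gaussQ_neg, neg_pow]
  norm_num
  ring

open ProbabilityTheory

lemma gaussianPDFReal_one (x : ℝ) : gaussianPDFReal 0 1 x = gphi x := by
  unfold gaussianPDFReal gphi
  push_cast
  rw [mul_one, sub_zero, mul_one]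
  ring

lemma N01_Ico {s t : ℝ} (h : s ≤ t) :
    gaussianReal 0 1 (Set.Ico s t) = ENNReal.ofReal (gaussQ s - gaussQ t) := by
  rw [gaussianReal_apply_eq_integral 0 one_ne_zero]
  congr 1
  rw [gaussQ_sub h]
  simp_rw [gaussianPDFReal_one]
  rw [integral_Ioc_eq_integral_Ioo, integral_Ico_eq_integral_Ioo]

lemma gaussianReal_var_Ico {a : ℝ} (ha : 0 < a) {s t : ℝ} (h : s ≤ t) :
    gaussianReal 0 (Real.toNNReal (1 / a)) (Set.Ico s t)
      = ENNReal.ofReal (gaussQ (Real.sqrt a * s) - gaussQ (Real.sqrt a * t)) := by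
  have hsa : 0 < Real.sqrt a := Real.sqrt_pos.2 ha
  set σ : ℝ := (Real.sqrt a)⁻¹ with hσ
  have hσpos : 0 < σ := inv_pos.2 hsa
  have hmap := gaussianReal_map_const_mul (μ := 0) (v := 1) σ
  have hσ2 : σ ^ 2 = 1 / a := by
    rw [hσ, ← Real.sqrt_inv, Real.sq_sqrt (by positivity), one_div]
  have hvar : (.mk (σ ^ 2) (sq_nonneg _) : NNReal) * 1 = Real.toNNReal (1 / a) := by
    ext
    push_cast
    simp [Real.toNNReal, max_eq_left (by positivity : (0:ℝ) ≤ 1/a), hσ2]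
    exact ha.le
  rw [mul_zero, hvar] at hmap
  rw [← hmap, Measure.map_apply (by fun_prop) measurableSet_Ico]
  have hpre : (fun x : ℝ => σ * x) ⁻¹' Set.Ico s t
      = Set.Ico (Real.sqrt a * s) (Real.sqrt a * t) := by
    ext x
    simp only [Set.mem_preimage, Set.mem_Ico]
    constructor
    · rintro ⟨h1, h2⟩
      constructor
      · calc Real.sqrt a * s ≤ Real.sqrt a * (σ * x) := by
              exact mul_le_mul_of_nonneg_left h1 hsa.le
          _ = x := by rw [hσ]; field_simp
      · calc x = Real.sqrt a * (σ * x) := by rw [hσ]; field_simp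
          _ < Real.sqrt a * t := by exact mul_lt_mul_of_pos_left h2 hsa
    · rintro ⟨h1, h2⟩
      constructor
      · calc s = σ * (Real.sqrt a * s) := by rw [hσ]; field_simp
          _ ≤ σ * x := mul_le_mul_of_nonneg_left h1 hσpos.le
      · calc σ * x < σ * (Real.sqrt a * t) := mul_lt_mul_of_pos_left h2 hσpos
          _ = t := by rw [hσ]; field_simp
  rw [hpre]
  exact N01_Ico (mul_le_mul_of_nonneg_left h hsa.le)

/-- For `U` uniform on `(−2^{-d}, 2^{-d})` and `Z ~ N(0, σ²)` independent
of `U` with `σ = 1/√a`, one has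
`P(−1 + U ≤ Z < 1 + U) = 1 − [G(√a(1+2^{-d})) − G(√a(1−2^{-d}))]/(√a 2^{-d})`. -/
theorem uniform_gaussian_noncrossing_prob (a : ℝ) (ha : 0 < a) (d : ℕ) :
    ((ENNReal.ofReal ((2 : ℝ) ^ ((d : ℤ) - 1)) •
        (volume.restrict (Set.Ioo (-((2 : ℝ) ^ (-(d : ℤ)))) ((2 : ℝ) ^ (-(d : ℤ)))))).prod
      (ProbabilityTheory.gaussianReal 0 (Real.toNNReal (1 / a))))
      {p : ℝ × ℝ | -1 + p.1 ≤ p.2 ∧ p.2 < 1 + p.1}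
    = ENNReal.ofReal (1 -
        (gaussG (Real.sqrt a * (1 + (2 : ℝ) ^ (-(d : ℤ))))
          - gaussG (Real.sqrt a * (1 - (2 : ℝ) ^ (-(d : ℤ)))))
        / (Real.sqrt a * (2 : ℝ) ^ (-(d : ℤ)))) := by
  have hsa : 0 < Real.sqrt a := Real.sqrt_pos.2 ha
  set sa := Real.sqrt a with hsa0
  set ε : ℝ := (2 : ℝ) ^ (-(d : ℤ)) with hε
  have hεpos : 0 < ε := by rw [hε]; positivity
  have hSm : MeasurableSet {p : ℝ × ℝ | -1 + p.1 ≤ p.2 ∧ p.2 < 1 + p.1} := by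
    have hrfl : {p : ℝ × ℝ | -1 + p.1 ≤ p.2 ∧ p.2 < 1 + p.1}
        = {p : ℝ × ℝ | -1 + p.1 ≤ p.2} ∩ {p : ℝ × ℝ | p.2 < 1 + p.1} := rfl
    rw [hrfl]
    exact (measurableSet_le (measurable_const.add measurable_fst) measurable_snd).inter
      (measurableSet_lt measurable_snd (measurable_const.add measurable_fst))
  rw [Measure.prod_apply hSm, lintegral_smul_measure]
  set f : ℝ → ℝ := fun u => gaussQ (sa * (-1 + u)) - gaussQ (sa * (1 + u)) with hf
  have hsec : ∀ u : ℝ,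
      ProbabilityTheory.gaussianReal 0 (Real.toNNReal (1 / a))
        (Prod.mk u ⁻¹' {p : ℝ × ℝ | -1 + p.1 ≤ p.2 ∧ p.2 < 1 + p.1})
      = ENNReal.ofReal (f u) := by
    intro u
    have hpre : Prod.mk u ⁻¹' {p : ℝ × ℝ | -1 + p.1 ≤ p.2 ∧ p.2 < 1 + p.1}
        = Set.Ico (-1 + u) (1 + u) := rfl
    rw [hpre, gaussianReal_var_Ico ha (by linarith)]
  simp_rw [hsec]
  have hfc : Continuous f := by
    rw [hf]
    exact (continuous_gaussQ.comp (by fun_prop)).sub (continuous_gaussQ.comp (by fun_prop))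
  have hfnn : ∀ u, 0 ≤ f u := fun u => gaussQ_diff_nonneg (by nlinarith)
  rw [← ofReal_integral_eq_lintegral_ofReal
    ((hfc.integrableOn_Icc).mono_set Set.Ioo_subset_Icc_self)
    (Filter.Eventually.of_forall hfnn)]
  have hFTC : (∫ u in Set.Ioo (-ε) ε, f u)
      = (gaussG (sa * (-1 + ε)) - gaussG (sa * (1 + ε))) / sa
        - (gaussG (sa * (-1 + -ε)) - gaussG (sa * (1 + -ε))) / sa := by
    rw [← integral_Ioc_eq_integral_Ioo, ← intervalIntegral.integral_of_le (by linarith)]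
    refine intervalIntegral.integral_eq_sub_of_hasDerivAt
      (f := fun u => (gaussG (sa * (-1 + u)) - gaussG (sa * (1 + u))) / sa) ?_
      (hfc.intervalIntegrable _ _)
    intro x _
    have h1 : HasDerivAt (fun u : ℝ => sa * (-1 + u)) sa x := by
      simpa using ((hasDerivAt_id x).const_add (-1 : ℝ)).const_mul sa
    have h1' : HasDerivAt (fun u : ℝ => sa * (1 + u)) sa x := by
      simpa using ((hasDerivAt_id x).const_add (1 : ℝ)).const_mul sa
    have h2 := (hasDerivAt_gaussG (sa * (-1 + x))).comp x h1
    have h3 := (hasDerivAt_gaussG (sa * (1 + x))).comp x h1'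
    have h4 := (h2.sub h3).div_const sa
    refine h4.congr_deriv ?_
    rw [hf]
    field_simp
  rw [hFTC, smul_eq_mul, ← ENNReal.ofReal_mul (by positivity)]
  congr 1
  have hG1 : gaussG (sa * (-1 + ε)) = gaussG (sa * (1 - ε)) - sa * (1 - ε) := by
    rw [show sa * (-1 + ε) = -(sa * (1 - ε)) by ring, gaussG_neg]
  have hG2 : gaussG (sa * (-1 + -ε)) = gaussG (sa * (1 + ε)) - sa * (1 + ε) := by
    rw [show sa * (-1 + -ε) = -(sa * (1 + ε)) by ring, gaussG_neg]
  have hG3 : sa * (1 + -ε) = sa * (1 - ε) := by ring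
  rw [hG1, hG2, hG3]
  have hpow : (2 : ℝ) ^ ((d : ℤ) - 1) = 1 / (2 * ε) := by
    rw [hε, eq_div_iff (by positivity), ← mul_assoc,
      show ((2:ℝ)^((d:ℤ)-1) * 2) = 2 ^ ((d:ℤ) - 1 + 1) by rw [zpow_add_one₀ two_ne_zero],
      ← zpow_add₀ (two_ne_zero : (2:ℝ) ≠ 0)]
    norm_num
  rw [hpow]
  field_simp
  ring
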